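/- For all integers N ≥ 1 and n ≥ 1, B_{N,n} = n! · ∑_{k=1}^{n} C(n+1, k+1) ∑_{i_1+⋯+i_k=n, i_1,…,i_k ≥ 0} (−N!)^k / ((N+i_1)! ⋯ (N+i_k)!), where the inner sum is over all k-tuples of nonnegative integers summing to n and C(a,b) denotes the binomial coefficient. -/

import Mathlib

/-!
Since the constant term of `f = hgSeries N` is `1`, the coefficient of `xⁿ` in `f⁻¹` agrees with
that of the truncated geometric series `∑_{m ≤ n} (1 - f)ᵐ`. Expanding `(1 + (-f))ᵐ` binomially and
summing over `m` with the hockey-stick identity `∑_{j ≤ m ≤ n} C(m, j) = C(n + 1, j + 1)` gives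
`∑_{k ≤ n} C(n + 1, k + 1) [xⁿ] (-f)ᵏ`; the term `k = 0` vanishes for `n ≥ 1`, and `[xⁿ] (-f)ᵏ`
is the sum over compositions of `n` into `k` parts of products of coefficients of `-f`.
-/

/-- The power series ∑_{i≥0} (N!/(N+i)!) xⁱ over ℚ. -/
noncomputable def hgSeries (N : ℕ) : PowerSeries ℚ :=
  PowerSeries.mk fun i => (N.factorial : ℚ) / ((N + i).factorial : ℚ)

/-- The hypergeometric Bernoulli number `B_{N,n}`, defined so that
`∑ (B_{N,n}/n!) xⁿ` is the multiplicative inverse of `hgSeries N` in ℚ[[x]]. -/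
noncomputable def hB (N n : ℕ) : ℚ :=
  (n.factorial : ℚ) * PowerSeries.coeff n (hgSeries N)⁻¹

open Finset PowerSeries

theorem sum_range_one_add_pow_eq_sum_choose {R : Type*} [CommSemiring R] (z : R) (n : ℕ) :
    ∑ m ∈ range (n + 1), (1 + z) ^ m =
      ∑ j ∈ range (n + 1), ((n + 1).choose (j + 1) : R) * z ^ j := by
  have hswap : ∑ m ∈ range (n + 1), ∑ j ∈ range (m + 1), (m.choose j : R) * z ^ j =
      ∑ j ∈ range (n + 1), ∑ m ∈ Icc j n, (m.choose j : R) * z ^ j :=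
    sum_comm' fun m j => by simp only [mem_range, mem_Icc]; omega
  simp_rw [add_comm (1 : R), add_pow, one_pow, mul_one, mul_comm (z ^ _), hswap, ← sum_mul,
    ← Nat.cast_sum, Nat.sum_Icc_choose]

namespace PowerSeries

variable {R : Type*}

theorem coeff_pow_eq_sum_antidiagonalTuple [CommSemiring R] (k n : ℕ) (φ : R⟦X⟧) :
    coeff n (φ ^ k) = ∑ l ∈ Nat.antidiagonalTuple k n, ∏ i, coeff (l i) φ := by
  rw [← Fin.prod_const, coeff_prod, ← piAntidiag_univ_fin_eq_antidiagonalTuple, finsuppAntidiag,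
    sum_map, ← sum_attach (piAntidiag univ n)]
  rfl

theorem coeff_inv_eq_coeff_sum_range_one_sub_pow [Field R] {f : R⟦X⟧}
    (hf : constantCoeff f = 1) (n : ℕ) :
    coeff n f⁻¹ = coeff n (∑ m ∈ range (n + 1), (1 - f) ^ m) := by
  have hX : X ^ (n + 1) ∣ f⁻¹ * (1 - f) ^ (n + 1) :=
    (pow_dvd_pow_of_dvd (X_dvd_iff.mpr (by simp [hf])) _).mul_left _
  have hgeom : f⁻¹ = ∑ m ∈ range (n + 1), (1 - f) ^ m + f⁻¹ * (1 - f) ^ (n + 1) := by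
    linear_combination (∑ m ∈ range (n + 1), (1 - f) ^ m) *
      PowerSeries.inv_mul_cancel f (by simp [hf]) + f⁻¹ * geom_sum_mul (1 - f) (n + 1)
  rw [hgeom, map_add, X_pow_dvd_iff.mp hX n n.lt_succ_self, add_zero]

theorem coeff_inv_eq_sum_choose [Field R] {f : R⟦X⟧} (hf : constantCoeff f = 1) (n : ℕ) :
    coeff n f⁻¹ =
      ∑ j ∈ range (n + 1), ((n + 1).choose (j + 1) : R) * coeff n ((-f) ^ j) := by
  simp_rw [coeff_inv_eq_coeff_sum_range_one_sub_pow hf, sub_eq_add_neg,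
    sum_range_one_add_pow_eq_sum_choose, map_sum, ← map_natCast (C (R := R)), coeff_C_mul]

end PowerSeries

theorem coeff_hgSeries (N i : ℕ) : coeff i (hgSeries N) = N.factorial / (N + i).factorial :=
  coeff_mk _ _

theorem constantCoeff_hgSeries (N : ℕ) : constantCoeff (hgSeries N) = 1 := by
  rw [← coeff_zero_eq_constantCoeff_apply, coeff_hgSeries, add_zero, div_self (by positivity)]

theorem stmt3_general (N n : ℕ) (hn : 1 ≤ n) :
    hB N n = (n.factorial : ℚ) * ∑ k ∈ Finset.Icc 1 n, ((n + 1).choose (k + 1) : ℚ) *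
      ∑ i ∈ Finset.Nat.antidiagonalTuple k n,
        (-(N.factorial : ℚ)) ^ k / ∏ j, ((N + i j).factorial : ℚ) := by
  rw [hB, coeff_inv_eq_sum_choose (constantCoeff_hgSeries N), range_eq_Ico,
    sum_eq_sum_Ico_succ_bot (by omega), pow_zero, coeff_one, if_neg (by omega), mul_zero, zero_add,
    zero_add, Ico_add_one_right_eq_Icc]
  congr 1
  refine sum_congr rfl fun k _ => ?_
  simp_rw [coeff_pow_eq_sum_antidiagonalTuple, map_neg, coeff_hgSeries, ← neg_div,
    prod_div_distrib, prod_const, card_fin]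

theorem stmt3 (N n : ℕ) (hN : 1 ≤ N) (hn : 1 ≤ n) :
    hB N n = (n.factorial : ℚ) * ∑ k ∈ Finset.Icc 1 n, ((n + 1).choose (k + 1) : ℚ) *
      ∑ i ∈ Finset.Nat.antidiagonalTuple k n,
        (-(N.factorial : ℚ)) ^ k / ∏ j, ((N + i j).factorial : ℚ) :=
  stmt3_general N n hn
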